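/- Let T be a closed subset of [0,1] containing 0 and 1, C_T the Banach space of continuous functions on T vanishing at 0 with the sup norm, and H_T the Cameron–Martin space defined via the Guseinov measure λ_Δ. Then H_T embeds continuously into C_T: for every h ∈ H_T, sup_{t∈T} |h(t)| ≤ ‖h^Δ‖_{L²(λ_Δ)} (using λ_Δ(T) = 1 and Cauchy–Schwarz), and the image of H_T is dense in C_T. -/

import Mathlib

open MeasureTheory Set
open scoped ENNReal Classical

noncomputable def rhoBar (T : Set ℝ) (t : ℝ) : ℝ :=
  if t = 0 then 0 else sSup {u | u ∈ T ∧ u < t}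

noncomputable def sigmaBar (T : Set ℝ) (t : ℝ) : ℝ :=
  if t = 1 then 1 else sInf {u | u ∈ T ∧ t < u}

noncomputable def lamDelta (T : Set ℝ) : Measure ℝ :=
  Measure.map (rhoBar T) (volume.restrict (Icc 0 1))

/-!
`λ_Δ` is the image of Lebesgue measure on `[0,1]` under `ρ̄`, which maps `[0,1]` monotonically
into `T` and collapses each gap `(a, b]` of `T` onto its left end `a`; hence
`λ_Δ([a, b) ∩ T) = b - a` for `a, b ∈ T`. The embedding bound is Cauchy–Schwarz for the
probability measure `λ_Δ`, in the form `Var |h^Δ| ≥ 0`.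

For density, take the nodes `q_j = max (T ∩ [0, j/n])`. The step function equal on
`[q_j, q_{j+1})` to the slope of `ω` between the two nodes integrates to the linear interpolant
of `ω` at the nodes, and a point `t ∈ T` with `q_i ≤ t ≤ q_{i+1}` satisfies `q_{i+1} - t ≤ 1/n`.
Uniform continuity and boundedness of `ω` on the compact set `T` then make the interpolation
error small.
-/

theorem abs_setIntegral_le_sqrt_integral_sq {α : Type*} [MeasurableSpace α] {μ : Measure α}
    [IsProbabilityMeasure μ] {f : α → ℝ} (hf : MemLp f 2 μ) (s : Set α) :
    |∫ x in s, f x ∂μ| ≤ √(∫ x, f x ^ 2 ∂μ) := by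
  have hjensen : (∫ x, |f x| ∂μ) ^ 2 ≤ ∫ x, f x ^ 2 ∂μ := by
    have := ProbabilityTheory.variance_nonneg |f| μ
    rw [ProbabilityTheory.variance_eq_sub hf.abs, sub_nonneg] at this
    simpa [sq_abs] using this
  calc |∫ x in s, f x ∂μ| ≤ ∫ x in s, |f x| ∂μ := abs_integral_le_integral_abs
    _ ≤ ∫ x, |f x| ∂μ :=
      setIntegral_le_integral (hf.integrable one_le_two).abs (ae_of_all _ fun _ => abs_nonneg _)
    _ ≤ √(∫ x, f x ^ 2 ∂μ) := Real.le_sqrt_of_sq_le hjensen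

theorem sum_slope_mul_min_sub_min {q : ℕ → ℝ} (hq : Monotone q) (f : ℝ → ℝ) {i n : ℕ}
    (hin : i < n) {t : ℝ} (hit : q i ≤ t) (hti : t ≤ q (i + 1)) :
    ∑ j ∈ Finset.range n, slope f (q j) (q (j + 1)) * (min (q (j + 1)) t - min (q j) t)
      = f (q i) - f (q 0) + slope f (q i) (q (i + 1)) * (t - q i) := by
  induction n, hin using Nat.le_induction with
  | base =>
    rw [Finset.sum_range_succ, min_eq_right hti, min_eq_left hit,
      ← Finset.sum_range_sub (fun j => f (q j))]
    congr 1
    refine Finset.sum_congr rfl fun j hj => ?_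
    have hj : j + 1 ≤ i := Finset.mem_range.1 hj
    rw [min_eq_left ((hq hj).trans hit), min_eq_left ((hq (j.le_succ.trans hj)).trans hit),
      mul_comm, ← smul_eq_mul, sub_smul_slope, vsub_eq_sub]
  | succ n hn ih =>
    have htn : t ≤ q n := hti.trans (hq hn)
    rw [Finset.sum_range_succ, ih, min_eq_right (htn.trans (hq n.le_succ)), min_eq_right htn,
      sub_self, mul_zero, add_zero]

theorem abs_sub_add_slope_mul_le (f : ℝ → ℝ) {a b t : ℝ} (hat : a ≤ t) (htb : t ≤ b) :
    |f t - (f a + slope f a b * (t - a))|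
      ≤ |f t - f b| + |f b - f a| * ((b - t) / (b - a)) := by
  rcases (hat.trans htb).eq_or_lt with rfl | hab
  · obtain rfl : t = a := le_antisymm htb hat
    simp
  have hb : f a + slope f a b * (t - a) = f b - (f b - f a) * ((b - t) / (b - a)) := by
    rw [slope_def_field]
    field_simp
    ring
  calc |f t - (f a + slope f a b * (t - a))|
      = |(f t - f b) + (f b - f a) * ((b - t) / (b - a))| := by rw [hb]; ring_nf
    _ ≤ |f t - f b| + |(f b - f a) * ((b - t) / (b - a))| := abs_add_le _ _
    _ = |f t - f b| + |f b - f a| * ((b - t) / (b - a)) := by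
      rw [abs_mul, abs_of_nonneg (a := (b - t) / (b - a))
        (div_nonneg (sub_nonneg.2 htb) (sub_nonneg.2 hab.le))]

-- Near `b` the interpolant is close to `f b`; the weight `(b - t) / (b - a)` of the far node `a`
-- is small unless `a` is itself within `δ` of `b`.
theorem abs_sub_add_slope_mul_lt {S : Set ℝ} {f : ℝ → ℝ} {δ ε M η : ℝ}
    (hf : ∀ x ∈ S, ∀ y ∈ S, dist x y < δ → dist (f x) (f y) < ε / 2)
    (hM : ∀ x ∈ S, ‖f x‖ ≤ M) {a b t : ℝ} (ha : a ∈ S) (hb : b ∈ S) (ht : t ∈ S)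
    (hat : a ≤ t) (htb : t ≤ b) (hbt : b - t ≤ η) (hηδ : η < δ) (hηM : 4 * M * η < δ * ε) :
    |f t - (f a + slope f a b * (t - a))| < ε := by
  have hnear : |f t - f b| < ε / 2 :=
    hf t ht b hb (by rw [Real.dist_eq, abs_sub_comm, abs_of_nonneg (by linarith)]; linarith)
  have hab : 0 ≤ b - a := by linarith
  have hfar : |f b - f a| * ((b - t) / (b - a)) < ε / 2 := by
    rcases lt_or_ge (b - a) δ with hsmall | hlarge
    · refine (mul_le_of_le_one_right (abs_nonneg _)
        (div_le_one_of_le₀ (by linarith) hab)).trans_lt ?_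
      exact hf b hb a ha (by rwa [Real.dist_eq, abs_of_nonneg hab])
    · have hbound : |f b - f a| ≤ 2 * M := by
        have hfa := hM a ha
        have hfb := hM b hb
        rw [Real.norm_eq_abs] at hfa hfb
        linarith [abs_sub (f b) (f a)]
      have hδ : 0 < δ := (sub_nonneg.2 htb).trans_lt (hbt.trans_lt hηδ)
      calc |f b - f a| * ((b - t) / (b - a))
          ≤ 2 * M * (η / δ) :=
            mul_le_mul hbound (div_le_div₀ (by linarith) hbt hδ hlarge) (by positivity)
              (hbound.trans' (abs_nonneg _))
        _ < ε / 2 := by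
          rw [mul_div_assoc', div_lt_iff₀ hδ]
          linarith
  linarith [abs_sub_add_slope_mul_le f hat htb]

theorem exists_nat_div_le_le_succ_div {t : ℝ} (ht0 : 0 ≤ t) (ht1 : t ≤ 1) {n : ℕ}
    (hn : 0 < n) :
    ∃ i < n, (i : ℝ) / n ≤ t ∧ t ≤ (i + 1) / n := by
  have hn' : (0:ℝ) < n := Nat.cast_pos.2 hn
  rcases lt_or_ge ⌊t * n⌋₊ n with hk | hk
  · refine ⟨⌊t * n⌋₊, hk, ?_, ?_⟩
    · rw [div_le_iff₀ hn']
      exact Nat.floor_le (by positivity)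
    · rw [le_div_iff₀ hn']
      exact (Nat.lt_floor_add_one _).le
  · refine ⟨n - 1, Nat.sub_lt hn one_pos, ?_, ?_⟩
    · rw [div_le_iff₀ hn']
      have : (n : ℝ) ≤ t * n := (Nat.cast_le.2 hk).trans (Nat.floor_le (by positivity))
      rw [Nat.cast_pred hn]
      linarith
    · rw [Nat.cast_pred hn, sub_add_cancel, div_self hn'.ne']
      exact ht1

noncomputable def slopeStep (f : ℝ → ℝ) (q : ℕ → ℝ) (n : ℕ) (s : ℝ) : ℝ :=
  ∑ j ∈ Finset.range n,
    (Ico (q j) (q (j + 1))).indicator (fun _ => slope f (q j) (q (j + 1))) s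

theorem memLp_slopeStep {μ : Measure ℝ} [IsFiniteMeasure μ] (f : ℝ → ℝ) (q : ℕ → ℝ) (n : ℕ)
    (p : ℝ≥0∞) : MemLp (slopeStep f q n) p μ :=
  memLp_finsetSum _ fun _ _ =>
    memLp_indicator_const p measurableSet_Ico _ (Or.inr (measure_ne_top _ _))

section lamDelta

variable {T : Set ℝ}

theorem rhoBar_of_nonpos (hTsub : T ⊆ Icc 0 1) {x : ℝ} (hx : x ≤ 0) : rhoBar T x = 0 := by
  rcases hx.eq_or_lt with rfl | hx
  · simp [rhoBar]
  have : {u | u ∈ T ∧ u < x} = ∅ :=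
    eq_empty_of_forall_notMem fun u hu => by linarith [(hTsub hu.1).1, hu.2]
  simp [rhoBar, hx.ne, this]

theorem le_rhoBar (hTsub : T ⊆ Icc 0 1) {b x : ℝ} (hb : b ∈ T) (hbx : b < x) :
    b ≤ rhoBar T x := by
  rw [rhoBar, if_neg (by linarith [(hTsub hb).1])]
  exact le_csSup ⟨1, fun u hu => (hTsub hu.1).2⟩ ⟨hb, hbx⟩

theorem rhoBar_le_self (h0T : (0:ℝ) ∈ T) {x : ℝ} (hx : 0 ≤ x) : rhoBar T x ≤ x := by
  rw [rhoBar]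
  split_ifs with h
  · exact h.ge
  exact csSup_le ⟨0, h0T, hx.lt_of_ne' h⟩ fun u hu => hu.2.le

theorem rhoBar_mem (hT : IsClosed T) (hTsub : T ⊆ Icc 0 1) (h0T : (0:ℝ) ∈ T) {x : ℝ}
    (hx : 0 ≤ x) : rhoBar T x ∈ T := by
  rw [rhoBar]
  split_ifs with h
  · exact h0T
  refine closure_minimal (fun u (hu : u ∈ T ∧ u < x) => hu.1) hT ?_
  exact csSup_mem_closure ⟨0, h0T, hx.lt_of_ne' h⟩ ⟨1, fun u hu => (hTsub hu.1).2⟩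

theorem monotone_rhoBar (hTsub : T ⊆ Icc 0 1) (h0T : (0:ℝ) ∈ T) : Monotone (rhoBar T) := by
  intro s t hst
  rcases le_or_gt s 0 with hs | hs
  · rw [rhoBar_of_nonpos hTsub hs]
    rcases le_or_gt t 0 with ht | ht
    · exact (rhoBar_of_nonpos hTsub ht).ge
    · exact le_rhoBar hTsub h0T ht
  rw [rhoBar, rhoBar, if_neg hs.ne', if_neg (hs.trans_le hst).ne']
  exact csSup_le_csSup ⟨1, fun u hu => (hTsub hu.1).2⟩ ⟨0, h0T, hs⟩
    fun u hu => ⟨hu.1, hu.2.trans_le hst⟩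

theorem isProbabilityMeasure_lamDelta (hTsub : T ⊆ Icc 0 1) (h0T : (0:ℝ) ∈ T) :
    IsProbabilityMeasure (lamDelta T) := by
  have : IsProbabilityMeasure (volume.restrict (Icc (0:ℝ) 1)) := ⟨by simp⟩
  exact Measure.isProbabilityMeasure_map (monotone_rhoBar hTsub h0T).measurable.aemeasurable

theorem lamDelta_Ico_inter (hT : IsClosed T) (hTsub : T ⊆ Icc 0 1) (h0T : (0:ℝ) ∈ T)
    {a b : ℝ} (ha : a ∈ T) (hb : b ∈ T) :
    lamDelta T (Ico a b ∩ T) = ENNReal.ofReal (b - a) := by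
  rw [lamDelta, Measure.map_apply (monotone_rhoBar hTsub h0T).measurable
      (measurableSet_Ico.inter hT.measurableSet), Measure.restrict_apply' measurableSet_Icc]
  have hsub : Ioo a b ⊆ rhoBar T ⁻¹' (Ico a b ∩ T) ∩ Icc 0 1 := fun x hx => by
    have hx0 : 0 ≤ x := (hTsub ha).1.trans hx.1.le
    exact ⟨⟨⟨le_rhoBar hTsub ha hx.1, (rhoBar_le_self h0T hx0).trans_lt hx.2⟩,
      rhoBar_mem hT hTsub h0T hx0⟩, hx0, hx.2.le.trans (hTsub hb).2⟩
  have hsup : rhoBar T ⁻¹' (Ico a b ∩ T) ∩ Icc 0 1 ⊆ Icc a b := fun x hx => by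
    refine ⟨not_lt.1 fun hxa => ?_, not_lt.1 fun hbx => ?_⟩
    · exact (rhoBar_le_self h0T hx.2.1).not_gt (hxa.trans_le hx.1.1.1)
    · exact (le_rhoBar hTsub hb hbx).not_gt hx.1.1.2
  refine le_antisymm ?_ ?_
  · simpa using measure_mono (μ := volume) hsup
  · simpa using measure_mono (μ := volume) hsub

theorem setIntegral_indicator_Ico (hT : IsClosed T) (hTsub : T ⊆ Icc 0 1) (h0T : (0:ℝ) ∈ T)
    {a b t : ℝ} (ha : a ∈ T) (hb : b ∈ T) (hab : a ≤ b) (ht : t ∈ T) (c : ℝ) :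
    ∫ s in Ico 0 t ∩ T, (Ico a b).indicator (fun _ => c) s ∂lamDelta T
      = c * (min b t - min a t) := by
  have hset : Ico a b ∩ (Ico 0 t ∩ T) = Ico (min a t) (min b t) ∩ T := by
    ext x
    simp only [mem_inter_iff, mem_Ico, lt_min_iff, min_le_iff]
    constructor
    · rintro ⟨⟨hax, hxb⟩, ⟨-, hxt⟩, hx⟩
      exact ⟨⟨Or.inl hax, hxb, hxt⟩, hx⟩
    · rintro ⟨⟨hax | htx, hxb, hxt⟩, hx⟩
      · exact ⟨⟨hax, hxb⟩, ⟨(hTsub hx).1, hxt⟩, hx⟩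
      · exact absurd hxt htx.not_gt
  rw [integral_indicator_const c measurableSet_Ico, measureReal_restrict_apply measurableSet_Ico,
    hset, measureReal_def,
    lamDelta_Ico_inter hT hTsub h0T (min_rec' _ ha ht) (min_rec' _ hb ht),
    ENNReal.toReal_ofReal (sub_nonneg.2 (min_le_min_right t hab)), smul_eq_mul, mul_comm]

theorem setIntegral_slopeStep (hT : IsClosed T) (hTsub : T ⊆ Icc 0 1) (h0T : (0:ℝ) ∈ T)
    {q : ℕ → ℝ} (hq : Monotone q) (hqT : ∀ j, q j ∈ T) (f : ℝ → ℝ) {i n : ℕ} (hin : i < n)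
    {t : ℝ} (ht : t ∈ T) (hit : q i ≤ t) (hti : t ≤ q (i + 1)) :
    ∫ s in Ico 0 t ∩ T, slopeStep f q n s ∂lamDelta T
      = f (q i) - f (q 0) + slope f (q i) (q (i + 1)) * (t - q i) := by
  have := isProbabilityMeasure_lamDelta hTsub h0T
  simp only [slopeStep]
  rw [integral_finsetSum _ fun j _ => (integrable_const _).indicator measurableSet_Ico,
    Finset.sum_congr rfl fun j _ => setIntegral_indicator_Ico hT hTsub h0T (hqT j) (hqT (j + 1))
      (hq j.le_succ) ht _]
  exact sum_slope_mul_min_sub_min hq f hin hit hti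

end lamDelta

noncomputable def floorIn (T : Set ℝ) (x : ℝ) : ℝ := sSup (T ∩ Iic x)

section floorIn

variable {T : Set ℝ}

theorem floorIn_mem (hT : IsClosed T) (hTsub : T ⊆ Icc 0 1) (h0T : (0:ℝ) ∈ T) {x : ℝ}
    (hx : 0 ≤ x) : floorIn T x ∈ T ∩ Iic x :=
  (hT.inter isClosed_Iic).csSup_mem ⟨0, h0T, hx⟩ ⟨1, fun _ hu => (hTsub hu.1).2⟩

theorem le_floorIn (hTsub : T ⊆ Icc 0 1) {t x : ℝ} (ht : t ∈ T) (htx : t ≤ x) :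
    t ≤ floorIn T x :=
  le_csSup ⟨1, fun _ hu => (hTsub hu.1).2⟩ ⟨ht, htx⟩

theorem floorIn_mono (hTsub : T ⊆ Icc 0 1) (h0T : (0:ℝ) ∈ T) {x y : ℝ} (hx : 0 ≤ x)
    (hxy : x ≤ y) : floorIn T x ≤ floorIn T y :=
  csSup_le_csSup ⟨1, fun _ hu => (hTsub hu.1).2⟩ ⟨0, h0T, hx⟩
    (inter_subset_inter_right _ (Iic_subset_Iic.2 hxy))

theorem floorIn_zero (hT : IsClosed T) (hTsub : T ⊆ Icc 0 1) (h0T : (0:ℝ) ∈ T) :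
    floorIn T 0 = 0 :=
  have h := floorIn_mem hT hTsub h0T le_rfl
  le_antisymm h.2 (hTsub h.1).1

theorem exists_floorIn_bracket (hT : IsClosed T) (hTsub : T ⊆ Icc 0 1) (h0T : (0:ℝ) ∈ T)
    {n : ℕ} (hn : 0 < n) {t : ℝ} (ht : t ∈ T) :
    ∃ i < n, floorIn T (i / n) ≤ t ∧ t ≤ floorIn T ((i + 1 : ℕ) / n) ∧
      floorIn T ((i + 1 : ℕ) / n) - t ≤ 1 / n := by
  obtain ⟨i, hin, hit, hti⟩ := exists_nat_div_le_le_succ_div (hTsub ht).1 (hTsub ht).2 hn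
  have hti' : t ≤ ((i + 1 : ℕ) : ℝ) / n := by push_cast; exact hti
  refine ⟨i, hin, (floorIn_mem hT hTsub h0T (by positivity)).2.trans hit,
    le_floorIn hTsub ht hti', ?_⟩
  have hle : floorIn T ((i + 1 : ℕ) / n) ≤ ((i + 1 : ℕ) : ℝ) / n :=
    (floorIn_mem hT hTsub h0T (by positivity)).2
  have hstep : ((i + 1 : ℕ) : ℝ) / n - i / n = 1 / n := by push_cast; ring
  linarith

theorem exists_memLp_forall_abs_sub_setIntegral_lt (hT : IsClosed T) (hTsub : T ⊆ Icc 0 1)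
    (h0T : (0:ℝ) ∈ T) {ω : ℝ → ℝ} (hω : ContinuousOn ω T) (hω0 : ω 0 = 0) {ε : ℝ}
    (hε : 0 < ε) :
    ∃ hΔ : ℝ → ℝ, MemLp hΔ 2 (lamDelta T) ∧
      ∀ t ∈ T, |ω t - ∫ s in Ico 0 t ∩ T, hΔ s ∂lamDelta T| < ε := by
  have := isProbabilityMeasure_lamDelta hTsub h0T
  have hTc : IsCompact T := isCompact_Icc.of_isClosed_subset hT hTsub
  obtain ⟨δ, hδ, hωδ⟩ := Metric.uniformContinuousOn_iff.1
    (hTc.uniformContinuousOn_of_continuous hω) (ε / 2) (half_pos hε)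
  obtain ⟨M, hM⟩ := hTc.exists_bound_of_continuousOn hω
  obtain ⟨n, hn⟩ := exists_nat_gt (max (1 / δ) (4 * M / (δ * ε)))
  have hn0 : (0:ℝ) < n := (lt_max_of_lt_left (one_div_pos.2 hδ)).trans hn
  have hnδ : 1 / (n : ℝ) < δ := (one_div_lt hn0 hδ).2 ((le_max_left _ _).trans_lt hn)
  have hnM : 4 * M * (1 / n) < δ * ε := by
    rw [mul_one_div, div_lt_iff₀ hn0, ← div_lt_iff₀' (by positivity)]
    exact (le_max_right _ _).trans_lt hn
  set q : ℕ → ℝ := fun j => floorIn T (j / n)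
  have hqT : ∀ j, q j ∈ T := fun j => (floorIn_mem hT hTsub h0T (by positivity)).1
  have hq : Monotone q := fun i j hij => floorIn_mono hTsub h0T (by positivity) (by gcongr)
  have hq0 : q 0 = 0 := by simpa [q] using floorIn_zero hT hTsub h0T
  refine ⟨slopeStep ω q n, memLp_slopeStep ω q n 2, fun t ht => ?_⟩
  obtain ⟨i, hin, hit, hti, hgap⟩ :=
    exists_floorIn_bracket hT hTsub h0T (Nat.cast_pos.1 hn0) ht
  rw [setIntegral_slopeStep hT hTsub h0T hq hqT ω hin ht hit hti, hq0, hω0, sub_zero]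
  exact abs_sub_add_slope_mul_lt hωδ hM (hqT i) (hqT (i + 1)) ht hit hti hgap hnδ hnM

end floorIn

theorem stmt_14_general (T : Set ℝ) (hT : IsClosed T) (hTsub : T ⊆ Icc 0 1)
    (h0T : (0:ℝ) ∈ T) :
    (∀ hΔ : ℝ → ℝ, MemLp hΔ 2 (lamDelta T) → ∀ t ∈ T,
      |∫ s in Ico (0:ℝ) t ∩ T, hΔ s ∂(lamDelta T)|
        ≤ Real.sqrt (∫ s, (hΔ s)^2 ∂(lamDelta T))) ∧
    (∀ ω : ℝ → ℝ, ContinuousOn ω T → ω 0 = 0 → ∀ ε > 0, ∃ hΔ : ℝ → ℝ,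
      MemLp hΔ 2 (lamDelta T) ∧
      ∀ t ∈ T, |ω t - ∫ s in Ico (0:ℝ) t ∩ T, hΔ s ∂(lamDelta T)| < ε) := by
  have := isProbabilityMeasure_lamDelta hTsub h0T
  exact ⟨fun _ hΔ _ _ => abs_setIntegral_le_sqrt_integral_sq hΔ _,
    fun _ hω hω0 _ hε => exists_memLp_forall_abs_sub_setIntegral_lt hT hTsub h0T hω hω0 hε⟩

theorem stmt_14 (T : Set ℝ) (hT : IsClosed T) (hTsub : T ⊆ Icc 0 1)
    (h0T : (0:ℝ) ∈ T) (h1T : (1:ℝ) ∈ T) :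
    (∀ hΔ : ℝ → ℝ, MemLp hΔ 2 (lamDelta T) → ∀ t ∈ T,
      |∫ s in Ico (0:ℝ) t ∩ T, hΔ s ∂(lamDelta T)|
        ≤ Real.sqrt (∫ s, (hΔ s)^2 ∂(lamDelta T))) ∧
    (∀ ω : ℝ → ℝ, ContinuousOn ω T → ω 0 = 0 → ∀ ε > 0, ∃ hΔ : ℝ → ℝ,
      MemLp hΔ 2 (lamDelta T) ∧
      ∀ t ∈ T, |ω t - ∫ s in Ico (0:ℝ) t ∩ T, hΔ s ∂(lamDelta T)| < ε) :=
  stmt_14_general T hT hTsub h0T
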